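/- Let Ω ⊆ ℝ² be an open bounded set with positive Lebesgue measure, μ > 0, f : ℝ² → ℝ a C¹ function with f ≥ 0, and assume the nondegeneracy condition f(x)·‖∇f(x)‖² ≥ c > 0 for almost every x ∈ Ω. Define E(V) = ∫_Ω μ(‖∇u‖² + ‖∇v‖²) + f‖∇f‖²·‖V − ∇f‖² dx for pairs V = (u,v) of differentiable functions with square-integrable values and gradients. If V₁ and V₂ both minimize E over this class (that is, E(V₁) = E(V₂) ≤ E(W) for every admissible W), then V₁ = V₂ almost everywhere on Ω. -/

import Mathlib

/-!
At every point the GVF density is a convex quadratic function of the jet `(u, v, ∇u, ∇v)`, so by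
the parallelogram law the density of the midpoint `(V₁ + V₂) / 2` is the average of the densities
of `V₁` and `V₂` minus a quarter of the quadratic part evaluated at `V₁ - V₂`. The midpoint is
admissible, so minimality forces the integral of this nonnegative defect to vanish; the defect then
vanishes a.e., and since its fidelity weight `f‖∇f‖²` is at least `c > 0`, `V₁ = V₂` a.e.
-/

open MeasureTheory

/-- The Gradient Vector Flow energy
`E(V) = ∫_Ω μ(‖∇u‖² + ‖∇v‖²) + f‖∇f‖²·‖V − ∇f‖² dx` for `V = (u,v)`. -/
noncomputable def gvfEnergy (μ : ℝ) (f : EuclideanSpace ℝ (Fin 2) → ℝ)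
    (Ω : Set (EuclideanSpace ℝ (Fin 2))) (u v : EuclideanSpace ℝ (Fin 2) → ℝ) : ℝ :=
  ∫ x in Ω, μ * (‖gradient u x‖ ^ 2 + ‖gradient v x‖ ^ 2)
    + f x * ‖gradient f x‖ ^ 2
        * ((u x - gradient f x 0) ^ 2 + (v x - gradient f x 1) ^ 2)

/-- The admissible class: pairs `V = (u,v)` of functions that are differentiable on `Ω`,
whose values and gradients are square-integrable on `Ω`, and for which the energy
integrand is integrable (so that `E(V)` is finite). -/
def GvfAdmissible (μ : ℝ) (f : EuclideanSpace ℝ (Fin 2) → ℝ)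
    (Ω : Set (EuclideanSpace ℝ (Fin 2))) (u v : EuclideanSpace ℝ (Fin 2) → ℝ) : Prop :=
  (∀ x ∈ Ω, DifferentiableAt ℝ u x) ∧ (∀ x ∈ Ω, DifferentiableAt ℝ v x) ∧
  IntegrableOn (fun x => u x ^ 2) Ω ∧ IntegrableOn (fun x => v x ^ 2) Ω ∧
  IntegrableOn (fun x => ‖gradient u x‖ ^ 2) Ω ∧
  IntegrableOn (fun x => ‖gradient v x‖ ^ 2) Ω ∧
  IntegrableOn (fun x =>
    μ * (‖gradient u x‖ ^ 2 + ‖gradient v x‖ ^ 2)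
      + f x * ‖gradient f x‖ ^ 2
          * ((u x - gradient f x 0) ^ 2 + (v x - gradient f x 1) ^ 2)) Ω

theorem Integrable.sq_half_add {α : Type*} [MeasurableSpace α] {m : Measure α} {g₁ g₂ : α → ℝ}
    (h₁ : Integrable (fun x => g₁ x ^ 2) m) (h₂ : Integrable (fun x => g₂ x ^ 2) m)
    (hg : AEStronglyMeasurable (fun x => (g₁ x + g₂ x) / 2) m) :
    Integrable (fun x => ((g₁ x + g₂ x) / 2) ^ 2) m := by
  refine (h₁.add h₂).mono' (hg.pow 2) (ae_of_all _ fun x => ?_)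
  rw [Pi.add_apply, Real.norm_of_nonneg (by positivity)]
  nlinarith [sq_nonneg (g₁ x - g₂ x)]

section InnerProductSpace

variable {F : Type*} [NormedAddCommGroup F] [InnerProductSpace ℝ F]

theorem norm_half_smul_add_sq (a b : F) :
    ‖(2⁻¹ : ℝ) • (a + b)‖ ^ 2 = (‖a‖ ^ 2 + ‖b‖ ^ 2) / 2 - ‖a - b‖ ^ 2 / 4 := by
  have h := parallelogram_law_with_norm ℝ a b
  rw [norm_smul, mul_pow, Real.norm_of_nonneg (by norm_num)]
  nlinarith

theorem Integrable.norm_sq_of_eq_half_smul_add {α : Type*} [MeasurableSpace α] {m : Measure α}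
    {g g₁ g₂ : α → F} (h₁ : Integrable (fun x => ‖g₁ x‖ ^ 2) m)
    (h₂ : Integrable (fun x => ‖g₂ x‖ ^ 2) m) (hg : AEStronglyMeasurable g m)
    (hmid : ∀ᵐ x ∂m, g x = (2⁻¹ : ℝ) • (g₁ x + g₂ x)) :
    Integrable (fun x => ‖g x‖ ^ 2) m := by
  refine (h₁.add h₂).mono' (hg.norm.pow 2) ?_
  filter_upwards [hmid] with x hx
  rw [Pi.add_apply, Real.norm_of_nonneg (by positivity), hx, norm_half_smul_add_sq]
  nlinarith [sq_nonneg ‖g₁ x‖, sq_nonneg ‖g₂ x‖, sq_nonneg ‖g₁ x - g₂ x‖]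

variable [CompleteSpace F]

theorem gradient_half_add {u v : F → ℝ} {x : F} (hu : DifferentiableAt ℝ u x)
    (hv : DifferentiableAt ℝ v x) :
    gradient (fun y => (u y + v y) / 2) x = (2⁻¹ : ℝ) • (gradient u x + gradient v x) := by
  simp only [div_eq_inv_mul, gradient]
  rw [fderiv_const_mul (a := fun y => u y + v y) (hu.add hv), fderiv_fun_add hu hv, map_smul,
    map_add]

theorem measurable_gradient [MeasurableSpace F] [BorelSpace F] (u : F → ℝ) :
    Measurable (gradient u) :=
  (InnerProductSpace.toDual ℝ F).symm.continuous.measurable.comp (measurable_fderiv ℝ u)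

end InnerProductSpace

theorem ae_eq_zero_of_average_le_integral {α : Type*} [MeasurableSpace α] {m : Measure α}
    {g g₁ g₂ D : α → ℝ} (h₁ : Integrable g₁ m) (h₂ : Integrable g₂ m) (hg : Integrable g m)
    (hD : 0 ≤ᵐ[m] D) (hid : ∀ᵐ x ∂m, g x = (g₁ x + g₂ x) / 2 - D x)
    (hle : (∫ x, g₁ x ∂m + ∫ x, g₂ x ∂m) / 2 ≤ ∫ x, g x ∂m) :
    D =ᵐ[m] 0 := by
  have h_avg : Integrable (fun x => (g₁ x + g₂ x) / 2) m := (h₁.add h₂).div_const 2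
  have hD_eq : D =ᵐ[m] fun x => (g₁ x + g₂ x) / 2 - g x := by
    filter_upwards [hid] with x hx
    linarith
  have hD_int : Integrable D m := (h_avg.sub hg).congr hD_eq.symm
  have hD_integral : ∫ x, D x ∂m = (∫ x, g₁ x ∂m + ∫ x, g₂ x ∂m) / 2 - ∫ x, g x ∂m := by
    rw [integral_congr_ae hD_eq, integral_sub h_avg hg, integral_div,
      integral_add h₁ h₂]
  refine (integral_eq_zero_iff_of_nonneg_ae hD hD_int).mp <|
    le_antisymm ?_ (integral_nonneg_of_ae hD)
  linarith

section GVF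

local notation "ℝ²" => EuclideanSpace ℝ (Fin 2)

variable (μ : ℝ) (f : ℝ² → ℝ)

noncomputable def gvfDensity (u v : ℝ² → ℝ) (x : ℝ²) : ℝ :=
  μ * (‖gradient u x‖ ^ 2 + ‖gradient v x‖ ^ 2)
    + f x * ‖gradient f x‖ ^ 2 * ((u x - gradient f x 0) ^ 2 + (v x - gradient f x 1) ^ 2)

/-- The quadratic part of `gvfDensity`, evaluated at `(u₁ - u₂, v₁ - v₂)`. -/
noncomputable def gvfDefect (u₁ v₁ u₂ v₂ : ℝ² → ℝ) (x : ℝ²) : ℝ :=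
  μ * (‖gradient u₁ x - gradient u₂ x‖ ^ 2 + ‖gradient v₁ x - gradient v₂ x‖ ^ 2)
    + f x * ‖gradient f x‖ ^ 2 * ((u₁ x - u₂ x) ^ 2 + (v₁ x - v₂ x) ^ 2)

theorem gvfEnergy_eq_integral_gvfDensity (Ω : Set ℝ²) (u v : ℝ² → ℝ) :
    gvfEnergy μ f Ω u v = ∫ x in Ω, gvfDensity μ f u v x :=
  rfl

theorem gvfDensity_half_add {u₁ v₁ u₂ v₂ : ℝ² → ℝ} {x : ℝ²} (hu₁ : DifferentiableAt ℝ u₁ x)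
    (hv₁ : DifferentiableAt ℝ v₁ x) (hu₂ : DifferentiableAt ℝ u₂ x)
    (hv₂ : DifferentiableAt ℝ v₂ x) :
    gvfDensity μ f (fun y => (u₁ y + u₂ y) / 2) (fun y => (v₁ y + v₂ y) / 2) x
      = (gvfDensity μ f u₁ v₁ x + gvfDensity μ f u₂ v₂ x) / 2
        - gvfDefect μ f u₁ v₁ u₂ v₂ x / 4 := by
  simp only [gvfDensity, gvfDefect]
  rw [gradient_half_add hu₁ hu₂, gradient_half_add hv₁ hv₂, norm_half_smul_add_sq,
    norm_half_smul_add_sq]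
  ring

variable {μ f}

theorem gvfDensity_nonneg (hμ : 0 ≤ μ) (u v : ℝ² → ℝ) {x : ℝ²}
    (hw : 0 ≤ f x * ‖gradient f x‖ ^ 2) : 0 ≤ gvfDensity μ f u v x := by
  unfold gvfDensity
  positivity

theorem gvfDefect_nonneg (hμ : 0 ≤ μ) (u₁ v₁ u₂ v₂ : ℝ² → ℝ) {x : ℝ²}
    (hw : 0 ≤ f x * ‖gradient f x‖ ^ 2) : 0 ≤ gvfDefect μ f u₁ v₁ u₂ v₂ x := by
  unfold gvfDefect
  positivity

theorem eq_and_eq_of_gvfDefect_eq_zero (hμ : 0 ≤ μ) {u₁ v₁ u₂ v₂ : ℝ² → ℝ} {x : ℝ²}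
    (hw : 0 < f x * ‖gradient f x‖ ^ 2) (h : gvfDefect μ f u₁ v₁ u₂ v₂ x = 0) :
    u₁ x = u₂ x ∧ v₁ x = v₂ x := by
  have hμ_part : 0 ≤ μ * (‖gradient u₁ x - gradient u₂ x‖ ^ 2
      + ‖gradient v₁ x - gradient v₂ x‖ ^ 2) := by positivity
  have hsq : (u₁ x - u₂ x) ^ 2 + (v₁ x - v₂ x) ^ 2 = 0 := by
    unfold gvfDefect at h
    nlinarith [sq_nonneg (u₁ x - u₂ x), sq_nonneg (v₁ x - v₂ x)]
  constructor <;> nlinarith [sq_nonneg (u₁ x - u₂ x), sq_nonneg (v₁ x - v₂ x)]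

theorem aestronglyMeasurable_gvfDensity {m : Measure ℝ²} (hf : Measurable f) {u v : ℝ² → ℝ}
    (hu : AEMeasurable u m) (hv : AEMeasurable v m) :
    AEStronglyMeasurable (gvfDensity μ f u v) m := by
  have := measurable_gradient f
  have := measurable_gradient u
  have := measurable_gradient v
  unfold gvfDensity
  fun_prop

variable {Ω : Set ℝ²} {u₁ v₁ u₂ v₂ : ℝ² → ℝ}

theorem GvfAdmissible.integrableOn_gvfDensity {u v : ℝ² → ℝ} (h : GvfAdmissible μ f Ω u v) :
    IntegrableOn (gvfDensity μ f u v) Ω :=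
  h.2.2.2.2.2.2

theorem GvfAdmissible.ae_gvfDensity_half_add (hΩ : MeasurableSet Ω)
    (h₁ : GvfAdmissible μ f Ω u₁ v₁) (h₂ : GvfAdmissible μ f Ω u₂ v₂) :
    ∀ᵐ x ∂volume.restrict Ω,
      gvfDensity μ f (fun y => (u₁ y + u₂ y) / 2) (fun y => (v₁ y + v₂ y) / 2) x
        = (gvfDensity μ f u₁ v₁ x + gvfDensity μ f u₂ v₂ x) / 2
          - gvfDefect μ f u₁ v₁ u₂ v₂ x / 4 := by
  filter_upwards [ae_restrict_mem hΩ] with x hx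
  exact gvfDensity_half_add μ f (h₁.1 x hx) (h₁.2.1 x hx) (h₂.1 x hx) (h₂.2.1 x hx)

theorem GvfAdmissible.half_add (hΩ : MeasurableSet Ω) (hμ : 0 ≤ μ) (hf : Measurable f)
    (hw : ∀ᵐ x ∂volume.restrict Ω, 0 ≤ f x * ‖gradient f x‖ ^ 2)
    (h₁ : GvfAdmissible μ f Ω u₁ v₁) (h₂ : GvfAdmissible μ f Ω u₂ v₂) :
    GvfAdmissible μ f Ω (fun y => (u₁ y + u₂ y) / 2) (fun y => (v₁ y + v₂ y) / 2) := by
  have hid := h₁.ae_gvfDensity_half_add hΩ h₂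
  have havg := (h₁.integrableOn_gvfDensity.add h₂.integrableOn_gvfDensity).div_const 2
  obtain ⟨hu₁, hv₁, hu₁_sq, hv₁_sq, hgu₁, hgv₁, -⟩ := h₁
  obtain ⟨hu₂, hv₂, hu₂_sq, hv₂_sq, hgu₂, hgv₂, -⟩ := h₂
  have hdiff {a b : ℝ² → ℝ} (ha : ∀ x ∈ Ω, DifferentiableAt ℝ a x)
      (hb : ∀ x ∈ Ω, DifferentiableAt ℝ b x) :
      ∀ x ∈ Ω, DifferentiableAt ℝ (fun y => (a y + b y) / 2) x :=
    fun x hx => by have := ha x hx; have := hb x hx; fun_prop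
  have hmeas {a : ℝ² → ℝ} (ha : ∀ x ∈ Ω, DifferentiableAt ℝ a x) :
      AEStronglyMeasurable a (volume.restrict Ω) :=
    (DifferentiableOn.continuousOn fun x hx =>
      (ha x hx).differentiableWithinAt).aestronglyMeasurable hΩ
  have hum := hdiff hu₁ hu₂
  have hvm := hdiff hv₁ hv₂
  refine ⟨hum, hvm, Integrable.sq_half_add hu₁_sq hu₂_sq (hmeas hum),
    Integrable.sq_half_add hv₁_sq hv₂_sq (hmeas hvm),
    Integrable.norm_sq_of_eq_half_smul_add hgu₁ hgu₂ (measurable_gradient _).aestronglyMeasurable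
      ?_,
    Integrable.norm_sq_of_eq_half_smul_add hgv₁ hgv₂ (measurable_gradient _).aestronglyMeasurable
      ?_,
    ?_⟩
  · filter_upwards [ae_restrict_mem hΩ] with x hx using gradient_half_add (hu₁ x hx) (hu₂ x hx)
  · filter_upwards [ae_restrict_mem hΩ] with x hx using gradient_half_add (hv₁ x hx) (hv₂ x hx)
  -- the midpoint density is squeezed between `0` and the average density
  show IntegrableOn (gvfDensity μ f _ _) Ω
  refine havg.mono'
    (aestronglyMeasurable_gvfDensity hf (hmeas hum).aemeasurable (hmeas hvm).aemeasurable) ?_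
  filter_upwards [hid, hw] with x hx hwx
  rw [Real.norm_of_nonneg (gvfDensity_nonneg hμ _ _ hwx), hx, Pi.add_apply]
  linarith [gvfDefect_nonneg hμ u₁ v₁ u₂ v₂ hwx]

end GVF

theorem gvfEnergy_minimizer_unique_general
    (Ω : Set (EuclideanSpace ℝ (Fin 2))) (hΩo : IsOpen Ω)
    (μ c : ℝ) (hμ : 0 < μ) (hc : 0 < c)
    (f : EuclideanSpace ℝ (Fin 2) → ℝ) (hf : ContDiff ℝ 1 f)
    (hnondeg : ∀ᵐ x ∂(volume.restrict Ω), c ≤ f x * ‖gradient f x‖ ^ 2)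
    (u₁ v₁ u₂ v₂ : EuclideanSpace ℝ (Fin 2) → ℝ)
    (hV₁ : GvfAdmissible μ f Ω u₁ v₁) (hV₂ : GvfAdmissible μ f Ω u₂ v₂)
    (heq : gvfEnergy μ f Ω u₁ v₁ = gvfEnergy μ f Ω u₂ v₂)
    (hmin : ∀ u v : EuclideanSpace ℝ (Fin 2) → ℝ, GvfAdmissible μ f Ω u v →
      gvfEnergy μ f Ω u₁ v₁ ≤ gvfEnergy μ f Ω u v) :
    ∀ᵐ x ∂(volume.restrict Ω), u₁ x = u₂ x ∧ v₁ x = v₂ x := by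
  have hΩ := hΩo.measurableSet
  have hw : ∀ᵐ x ∂volume.restrict Ω, 0 ≤ f x * ‖gradient f x‖ ^ 2 :=
    hnondeg.mono fun x hx => hc.le.trans hx
  have hV := hV₁.half_add hΩ hμ.le hf.continuous.measurable hw hV₂
  have hdefect : (fun x => gvfDefect μ f u₁ v₁ u₂ v₂ x / 4) =ᵐ[volume.restrict Ω] 0 := by
    refine ae_eq_zero_of_average_le_integral hV₁.integrableOn_gvfDensity
      hV₂.integrableOn_gvfDensity hV.integrableOn_gvfDensity ?_
      (hV₁.ae_gvfDensity_half_add hΩ hV₂) ?_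
    · filter_upwards [hw] with x hx using
        div_nonneg (gvfDefect_nonneg hμ.le u₁ v₁ u₂ v₂ hx) zero_le_four
    · have hle := hmin _ _ hV
      simp only [gvfEnergy_eq_integral_gvfDensity] at heq hle
      linarith
  filter_upwards [hdefect, hnondeg] with x hx hcx
  exact eq_and_eq_of_gvfDefect_eq_zero hμ.le (hc.trans_le hcx) (by simpa using hx)

/-- under the nondegeneracy assumption `f‖∇f‖² ≥ c > 0` a.e. on `Ω`,
two minimizers of the GVF energy over the admissible class coincide a.e. on `Ω`. -/
theorem gvfEnergy_minimizer_unique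
    (Ω : Set (EuclideanSpace ℝ (Fin 2))) (hΩo : IsOpen Ω)
    (hΩb : Bornology.IsBounded Ω) (hΩpos : 0 < volume Ω)
    (μ c : ℝ) (hμ : 0 < μ) (hc : 0 < c)
    (f : EuclideanSpace ℝ (Fin 2) → ℝ) (hf : ContDiff ℝ 1 f) (hfpos : ∀ x, 0 ≤ f x)
    (hnondeg : ∀ᵐ x ∂(volume.restrict Ω), c ≤ f x * ‖gradient f x‖ ^ 2)
    (u₁ v₁ u₂ v₂ : EuclideanSpace ℝ (Fin 2) → ℝ)
    (hV₁ : GvfAdmissible μ f Ω u₁ v₁) (hV₂ : GvfAdmissible μ f Ω u₂ v₂)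
    (heq : gvfEnergy μ f Ω u₁ v₁ = gvfEnergy μ f Ω u₂ v₂)
    (hmin : ∀ u v : EuclideanSpace ℝ (Fin 2) → ℝ, GvfAdmissible μ f Ω u v →
      gvfEnergy μ f Ω u₁ v₁ ≤ gvfEnergy μ f Ω u v) :
    ∀ᵐ x ∂(volume.restrict Ω), u₁ x = u₂ x ∧ v₁ x = v₂ x :=
  gvfEnergy_minimizer_unique_general Ω hΩo μ c hμ hc f hf hnondeg u₁ v₁ u₂ v₂ hV₁ hV₂ heq hmin
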